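/- A finite multiset of integer intervals is uniquely determined by its containment counts: if M and M' are finite multisets of nonempty integer intervals such that for every pair of integers i ≤ j the number (with multiplicity) of intervals in M containing [i,j] equals the number of intervals in M' containing [i,j], then M = M'. -/

import Mathlib

/-!
An interval `[a, b]` contains `[i, j]` iff `a ≤ i` and `j ≤ b`, so the containment counts are the
two-dimensional cumulative distribution of the endpoint pairs, and the multiplicity of `[i, j]` is
recovered from them by inclusion–exclusion over the four corners `(i, j)`, `(i - 1, j)`,
`(i, j + 1)`, `(i - 1, j + 1)`. When `i ≤ j` all four corners are again pairs `i' ≤ j'`.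
-/

def containmentCount (M : Multiset (ℤ × ℤ)) (i j : ℤ) : ℕ :=
  (M.filter (fun p => p.1 ≤ i ∧ j ≤ p.2)).card

theorem count_eq_containmentCount_inclusion_exclusion (M : Multiset (ℤ × ℤ)) (i j : ℤ) :
    (M.count (i, j) : ℤ) =
      containmentCount M i j - containmentCount M (i - 1) j
        - containmentCount M i (j + 1) + containmentCount M (i - 1) (j + 1) := by
  induction M using Multiset.induction_on with
  | empty => simp [containmentCount]
  | cons p M ih =>
    obtain ⟨a, b⟩ := p
    simp only [containmentCount, Multiset.filter_cons, Multiset.count_cons, Multiset.card_add,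
      Prod.mk.injEq] at ih ⊢
    split_ifs <;> simp only [Multiset.card_singleton, Multiset.card_zero] <;> omega

/-- A finite multiset of nonempty integer intervals (encoded as pairs
`(a,b)` with `a ≤ b`) is uniquely determined by its containment counts:
if for every `i ≤ j` the number (with multiplicity) of intervals containing
`[i,j]` agrees for `M` and `M'`, then `M = M'`. -/
theorem multiset_intervals_determined_by_containment_counts
    (M M' : Multiset (ℤ × ℤ))
    (hM : ∀ p ∈ M, p.1 ≤ p.2) (hM' : ∀ p ∈ M', p.1 ≤ p.2)
    (h : ∀ i j : ℤ, i ≤ j →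
      (M.filter (fun p => p.1 ≤ i ∧ j ≤ p.2)).card =
      (M'.filter (fun p => p.1 ≤ i ∧ j ≤ p.2)).card) :
    M = M' := by
  have hρ : ∀ i j, i ≤ j → containmentCount M i j = containmentCount M' i j := h
  ext ⟨i, j⟩
  by_cases hij : i ≤ j
  · have e := count_eq_containmentCount_inclusion_exclusion M i j
    rw [hρ i j hij, hρ (i - 1) j (by omega), hρ i (j + 1) (by omega),
      hρ (i - 1) (j + 1) (by omega), ← count_eq_containmentCount_inclusion_exclusion] at e
    exact_mod_cast e
  · rw [Multiset.count_eq_zero.mpr fun hm => hij (hM _ hm),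
      Multiset.count_eq_zero.mpr fun hm => hij (hM' _ hm)]
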